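/- Let Φ be a crystallographic root system with Hessenberg set 𝔥, let P be a flow-up class at w ∈ W in H_T*(𝔥), and let v = s_α w be a cover of w in Bruhat order. If v⁻¹α ∉ −𝔥 (the edge w → v is deleted in Γ_𝔥), then P(v) = 0. -/

import Mathlib

open scoped RealInnerProductSpace Pointwise

noncomputable section

/-- Euclidean `n`-space, the ambient space of the root system. -/
abbrev EV (n : ℕ) := EuclideanSpace ℝ (Fin n)

/-- The (orthogonal) reflection in the hyperplane orthogonal to `α`. -/
def sRefl {n : ℕ} (α : EV n) : EV n ≃ₗᵢ[ℝ] EV n :=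
  Submodule.reflection ((ℝ ∙ α)ᗮ)

/-- A finite crystallographic root system in `ℝⁿ`, together with a choice of
positive roots and a base of simple roots. -/
structure BasedRootSystem (n : ℕ) where
  /-- the set of roots -/
  Φ : Set (EV n)
  /-- the positive roots -/
  pos : Set (EV n)
  /-- the base of simple roots -/
  Δ : Set (EV n)
  finite : Φ.Finite
  nonzero : ∀ α ∈ Φ, α ≠ 0
  reduced : ∀ α ∈ Φ, ∀ c : ℝ, c • α ∈ Φ → c = 1 ∨ c = -1
  reflect_mem : ∀ α ∈ Φ, ∀ β ∈ Φ, sRefl α β ∈ Φ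
  cartan_int : ∀ α ∈ Φ, ∀ β ∈ Φ, ∃ m : ℤ, (m : ℝ) = 2 * ⟪α, β⟫ / ⟪α, α⟫
  pos_sub : pos ⊆ Φ
  pos_union : Φ = pos ∪ (-pos)
  pos_disj : pos ∩ (-pos) = ∅
  Δ_sub : Δ ⊆ pos
  Δ_indep : LinearIndependent ℝ ((↑) : Δ → EV n)
  Δ_span : Submodule.span ℝ Δ = ⊤
  pos_combo : ∀ α ∈ pos, α ∈ AddSubmonoid.closure Δ

namespace BasedRootSystem

variable {n : ℕ} (R : BasedRootSystem n)

/-- The root order: `α ≺ β` iff `β - α` is a nonempty sum of positive roots. -/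
def prec (a b : EV n) : Prop :=
  a ≠ b ∧ b - a ∈ AddSubmonoid.closure R.pos

/-- An ideal of the positive roots: upward closed for the root order. -/
def IsIdeal (I : Set (EV n)) : Prop :=
  I ⊆ R.pos ∧ ∀ β ∈ I, ∀ α ∈ R.pos, R.prec β α → α ∈ I

/-- A Hessenberg set: the complement in `Φ⁺` of an ideal. -/
def IsHess (h : Set (EV n)) : Prop :=
  h ⊆ R.pos ∧ R.IsIdeal (R.pos \ h)

/-- The Weyl group, generated by the reflections in the roots. -/
def Weyl : Subgroup (EV n ≃ₗᵢ[ℝ] EV n) :=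
  Subgroup.closure {g | ∃ α ∈ R.Φ, g = sRefl α}

/-- Application of a Weyl group element to a vector. -/
def ap (w : R.Weyl) (x : EV n) : EV n := (w : EV n ≃ₗᵢ[ℝ] EV n) x

/-- The inversion set `N_w = {α ∈ Φ⁺ : w⁻¹ α ∈ Φ⁻}`. -/
def N (w : R.Weyl) : Set (EV n) := {α | α ∈ R.pos ∧ R.ap w⁻¹ α ∈ -R.pos}

/-- The length of a Weyl group element, `ℓ(w) = |N_w|`. -/
def len (w : R.Weyl) : ℕ := (R.N w).ncard

/-- The `𝔥`-inversion set `N_w^𝔥 = {α ∈ Φ⁺ : w⁻¹ α ∈ -𝔥}`. -/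
def Nh (h : Set (EV n)) (w : R.Weyl) : Set (EV n) :=
  {α | α ∈ R.pos ∧ R.ap w⁻¹ α ∈ -h}

/-- `ℓ_𝔥(w) = |N_w^𝔥|`, the number of Hessenberg edges ending at `w`. -/
def lenh (h : Set (EV n)) (w : R.Weyl) : ℕ := (R.Nh h w).ncard

/-- `v` covers `w` in Bruhat order: `v = s_α w` with `ℓ(v) = ℓ(w) + 1`. -/
def Covers (v w : R.Weyl) : Prop :=
  ∃ α ∈ R.pos, (v : EV n ≃ₗᵢ[ℝ] EV n) = sRefl α * (w : EV n ≃ₗᵢ[ℝ] EV n) ∧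
    R.len v = R.len w + 1

/-- Bruhat order: the transitive closure of the relations `w < s_α w`
whenever the length increases. -/
def bruhatLt (w v : R.Weyl) : Prop :=
  Relation.TransGen (fun u u' : R.Weyl =>
    ∃ α ∈ R.pos, (u' : EV n ≃ₗᵢ[ℝ] EV n) = sRefl α * (u : EV n ≃ₗᵢ[ℝ] EV n) ∧
      R.len u < R.len u') w v

/-- The edge relation of the Hessenberg graph `Γ_𝔥`: `u → w` when `w = s_α u`
with `α ∈ Φ⁺` and `w⁻¹ α ∈ -𝔥`. -/
def Edge (h : Set (EV n)) (u w : R.Weyl) : Prop :=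
  ∃ α ∈ R.pos, (w : EV n ≃ₗᵢ[ℝ] EV n) = sRefl α * (u : EV n ≃ₗᵢ[ℝ] EV n) ∧
    R.ap w⁻¹ α ∈ -h

/-- The flow-up (reachability) order of the Hessenberg graph. -/
def flowLe (h : Set (EV n)) (x y : R.Weyl) : Prop :=
  Relation.ReflTransGen (R.Edge h) x y

/-- The strict flow-up order. -/
def flowLt (h : Set (EV n)) (x y : R.Weyl) : Prop :=
  Relation.TransGen (R.Edge h) x y

/-- The linear polynomial in `ℝ[Δ] = ℝ[x₁,…,xₙ]` corresponding to a vector. -/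
def lin (α : EV n) : MvPolynomial (Fin n) ℝ :=
  ∑ i, MvPolynomial.C (α i) * MvPolynomial.X i

/-- The action of an isometry `w` on the polynomial ring, induced by the
linear action on the ambient space: it sends `lin α` to `lin (w α)`. -/
def polyAct (w : EV n ≃ₗᵢ[ℝ] EV n) :
    MvPolynomial (Fin n) ℝ →ₐ[ℝ] MvPolynomial (Fin n) ℝ :=
  MvPolynomial.aeval fun i => lin (w (EuclideanSpace.single i 1))

/-- The dot action of the Weyl group on `Maps(W, ℝ[Δ])`:
`(w · P)(u) = w (P (w⁻¹ u))`. -/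
def dot (w : R.Weyl) (P : R.Weyl → MvPolynomial (Fin n) ℝ) :
    R.Weyl → MvPolynomial (Fin n) ℝ :=
  fun u => polyAct (w : EV n ≃ₗᵢ[ℝ] EV n) (P (w⁻¹ * u))

/-- Membership in the GKM ring `H_T^*(𝔥)`: the GKM conditions
`P(w) - P(s_α w) ∈ ⟨α⟩` along all edges of `Γ_𝔥`. -/
def GKM (h : Set (EV n)) (P : R.Weyl → MvPolynomial (Fin n) ℝ) : Prop :=
  ∀ u w : R.Weyl, ∀ α ∈ R.pos,
    (w : EV n ≃ₗᵢ[ℝ] EV n) = sRefl α * (u : EV n ≃ₗᵢ[ℝ] EV n) →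
    R.ap w⁻¹ α ∈ -h → P w - P u ∈ Ideal.span {lin α}

/-- The product `∏_{α ∈ S} α` (over `S ∩ Φ`) as an element of `ℝ[Δ]`. -/
def prodRoots (S : Set (EV n)) : MvPolynomial (Fin n) ℝ :=
  ∏ α ∈ (R.finite.inter_of_right S).toFinset, lin α

/-- A flow-up class at `x`: homogeneous of degree `ℓ_𝔥(x)`, with
`P(x) = ∏_{α ∈ N_x^𝔥} α`, supported on the flow-up of `x`, and satisfying the
GKM conditions. -/
def IsFlowUp (h : Set (EV n)) (x : R.Weyl)
    (P : R.Weyl → MvPolynomial (Fin n) ℝ) : Prop :=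
  R.GKM h P ∧ (∀ y, (P y).IsHomogeneous (R.lenh h x)) ∧
    P x = R.prodRoots (R.Nh h x) ∧ ∀ y, P y ≠ 0 → R.flowLe h x y

/-- Irreducibility: the roots admit no splitting into two nonempty mutually
orthogonal parts. -/
def IsIrreducible : Prop :=
  ∀ Ψ Ψ' : Set (EV n), Ψ ∪ Ψ' = R.Φ → (∀ a ∈ Ψ, ∀ b ∈ Ψ', ⟪a, b⟫ = 0) →
    Ψ = ∅ ∨ Ψ' = ∅

/-- `γ` is the highest root: `α ⪯ γ` for every root `α`. -/
def IsHighest (γ : EV n) : Prop :=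
  γ ∈ R.pos ∧ ∀ α ∈ R.Φ, α = γ ∨ R.prec α γ

end BasedRootSystem

/-!
Every edge `u → s_β u` of `Γ_𝔥` raises the length by at least one: as `(s_β u)⁻¹ β < 0`, the
map sending `γ` to `s_β γ` when that is positive and to `γ` otherwise injects `N_u` into
`N_{s_β u} ∖ {β}`. So if `P(v) ≠ 0`, the path from `w` to `v` in `Γ_𝔥` given by the support
condition must, as `ℓ(v) = ℓ(w) + 1`, be a single edge `w → s_β w = v`. Then `s_β = s_α` with
`α, β` positive forces `β = α`, so this edge is the deleted one.
-/

section Reflection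

variable {n : ℕ}

lemma sRefl_self (β : EV n) : sRefl β β = -β :=
  Submodule.reflection_orthogonalComplement_singleton_eq_neg β

lemma sRefl_sRefl (β x : EV n) : sRefl β (sRefl β x) = x :=
  Submodule.reflection_reflection _ x

lemma sRefl_inv (β : EV n) : (sRefl β)⁻¹ = sRefl β :=
  Submodule.reflection_inv

lemma sRefl_apply (β x : EV n) : sRefl β x = x - (2 * (⟪β, x⟫ / ‖β‖ ^ 2)) • β := by
  rw [sRefl, Submodule.reflection_orthogonal_apply, Submodule.reflection_singleton_apply,
    RCLike.ofReal_real_eq_id, id, neg_sub, two_nsmul, two_mul, add_smul]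

lemma mem_span_singleton_of_sRefl_eq_neg {α x : EV n} (hx : sRefl α x = -x) : x ∈ ℝ ∙ α := by
  rw [← Submodule.reflection_eq_self_iff, ← neg_inj, ← Submodule.reflection_orthogonal_apply]
  exact hx

end Reflection

namespace BasedRootSystem

variable {n : ℕ} (R : BasedRootSystem n)

lemma notMem_neg_pos {x : EV n} (hx : x ∈ R.pos) : x ∉ -R.pos := fun hx' =>
  (Set.eq_empty_iff_forall_notMem.mp R.pos_disj) x ⟨hx, hx'⟩

lemma mem_neg_pos_of_notMem_pos {x : EV n} (hx : x ∈ R.Φ) (hx' : x ∉ R.pos) : x ∈ -R.pos := by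
  rw [R.pos_union] at hx
  exact hx.resolve_left hx'

lemma eq_of_sRefl_eq {α β : EV n} (hα : α ∈ R.pos) (hβ : β ∈ R.pos)
    (hαβ : sRefl α = sRefl β) : α = β := by
  obtain ⟨c, rfl⟩ := Submodule.mem_span_singleton.mp
    (mem_span_singleton_of_sRefl_eq_neg (hαβ ▸ sRefl_self α))
  rcases R.reduced β (R.pos_sub hβ) c (R.pos_sub hα) with rfl | rfl
  · exact one_smul ℝ β
  · refine absurd ?_ (R.notMem_neg_pos hα)
    simpa using hβ

def simpleBasis : Module.Basis R.Δ ℝ (EV n) :=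
  Module.Basis.mk R.Δ_indep (by rw [Subtype.range_coe, R.Δ_span])

lemma simpleBasis_apply (δ : R.Δ) : R.simpleBasis δ = δ :=
  Module.Basis.mk_apply _ _ _

def height : EV n →ₗ[ℝ] ℝ :=
  R.simpleBasis.sumCoords

lemma eq_zero_or_one_le_height {x : EV n} (hx : x ∈ AddSubmonoid.closure R.Δ) :
    x = 0 ∨ 1 ≤ R.height x := by
  induction hx using AddSubmonoid.closure_induction with
  | mem δ hδ =>
    right
    have := R.simpleBasis.sumCoords_self_apply (i := ⟨δ, hδ⟩)
    rw [simpleBasis_apply] at this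
    exact this.ge
  | zero => exact Or.inl rfl
  | add x y _ _ ihx ihy =>
    rcases ihx with rfl | ihx
    · simpa using ihy
    rcases ihy with rfl | ihy
    · simpa using Or.inr ihx
    · right
      rw [map_add]
      linarith

lemma height_pos {α : EV n} (hα : α ∈ R.pos) : 0 < R.height α := by
  rcases R.eq_zero_or_one_le_height (R.pos_combo α hα) with h0 | h1
  · exact absurd h0 (R.nonzero α (R.pos_sub hα))
  · linarith

lemma height_neg {α : EV n} (hα : α ∈ -R.pos) : R.height α < 0 := by
  simpa using R.height_pos hα

lemma mem_neg_pos_of_height_neg {x : EV n} (hx : x ∈ R.Φ) (hneg : R.height x < 0) :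
    x ∈ -R.pos :=
  R.mem_neg_pos_of_notMem_pos hx fun hpos => (R.height_pos hpos).not_gt hneg

lemma mapsTo_of_mem_Weyl {g : EV n ≃ₗᵢ[ℝ] EV n} (hg : g ∈ R.Weyl) : Set.MapsTo g R.Φ R.Φ := by
  induction hg using Subgroup.closure_induction'' with
  | mem g hg =>
    obtain ⟨a, ha, rfl⟩ := hg
    exact R.reflect_mem a ha
  | inv_mem g hg =>
    obtain ⟨a, ha, rfl⟩ := hg
    rw [sRefl_inv]
    exact R.reflect_mem a ha
  | one => exact Set.mapsTo_id _
  | mul x y _ _ hx hy => exact hx.comp hy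

lemma ap_mem (w : R.Weyl) {γ : EV n} (hγ : γ ∈ R.Φ) : R.ap w γ ∈ R.Φ :=
  R.mapsTo_of_mem_Weyl w.2 hγ

lemma N_finite (w : R.Weyl) : (R.N w).Finite :=
  R.finite.subset fun _ hγ => R.pos_sub hγ.1

lemma ap_inv_of_eq_sRefl_mul {u u' : R.Weyl} {β : EV n}
    (hu' : (u' : EV n ≃ₗᵢ[ℝ] EV n) = sRefl β * (u : EV n ≃ₗᵢ[ℝ] EV n)) (x : EV n) :
    R.ap u'⁻¹ x = R.ap u⁻¹ (sRefl β x) := by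
  simp only [ap, Subgroup.coe_inv, hu', mul_inv_rev, sRefl_inv]
  rfl

/-- Writing `s_β γ = γ - c β`, positivity of `γ` and negativity of `s_β γ` force `c > 0`;
then `u⁻¹ (s_β γ) = u⁻¹ γ - c u⁻¹ β` is a root of negative height. -/
lemma ap_inv_sRefl_mem_neg_pos {u : R.Weyl} {β γ : EV n} (hβ : β ∈ R.pos)
    (hβu : R.ap u⁻¹ β ∈ R.pos) (hγ : γ ∈ R.N u) (hsγ : sRefl β γ ∉ R.pos) :
    R.ap u⁻¹ (sRefl β γ) ∈ -R.pos := by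
  have hsγΦ : sRefl β γ ∈ R.Φ := R.reflect_mem β (R.pos_sub hβ) γ (R.pos_sub hγ.1)
  set c := 2 * (⟪β, γ⟫ / ‖β‖ ^ 2)
  have hc : 0 < c := by
    have := R.height_neg (R.mem_neg_pos_of_notMem_pos hsγΦ hsγ)
    rw [sRefl_apply, map_sub, map_smul, smul_eq_mul] at this
    have := R.height_pos hγ.1
    have := R.height_pos hβ
    nlinarith
  refine R.mem_neg_pos_of_height_neg (R.ap_mem u⁻¹ hsγΦ) ?_
  have h1 := R.height_neg hγ.2
  have h2 := R.height_pos hβu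
  simp only [ap] at h1 h2 ⊢
  rw [sRefl_apply, map_sub, map_smul, map_sub, map_smul, smul_eq_mul]
  nlinarith

open Classical in
def foldPos (β γ : EV n) : EV n :=
  if sRefl β γ ∈ R.pos then sRefl β γ else γ

lemma injOn_foldPos (β : EV n) : Set.InjOn (R.foldPos β) R.pos := by
  intro γ₁ hγ₁ γ₂ hγ₂ heq
  unfold foldPos at heq
  split_ifs at heq with h₁ h₂ h₂
  · exact (sRefl β).injective heq
  · exact absurd (by rw [← heq, sRefl_sRefl]; exact hγ₁) h₂
  · exact absurd (by rw [heq, sRefl_sRefl]; exact hγ₂) h₁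
  · exact heq

variable {R}

lemma foldPos_mem_N {u u' : R.Weyl} {β γ : EV n} (hβ : β ∈ R.pos)
    (hu' : (u' : EV n ≃ₗᵢ[ℝ] EV n) = sRefl β * (u : EV n ≃ₗᵢ[ℝ] EV n))
    (hβu : R.ap u⁻¹ β ∈ R.pos) (hγ : γ ∈ R.N u) : R.foldPos β γ ∈ R.N u' := by
  unfold foldPos
  split_ifs with hsγ
  · exact ⟨hsγ, by rw [R.ap_inv_of_eq_sRefl_mul hu', sRefl_sRefl]; exact hγ.2⟩
  · refine ⟨hγ.1, ?_⟩
    rw [R.ap_inv_of_eq_sRefl_mul hu']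
    exact R.ap_inv_sRefl_mem_neg_pos hβ hβu hγ hsγ

lemma foldPos_ne {u : R.Weyl} {β γ : EV n} (hβu : R.ap u⁻¹ β ∈ R.pos) (hγ : γ ∈ R.N u) :
    R.foldPos β γ ≠ β := by
  unfold foldPos
  split_ifs with hsγ <;> intro heq
  · rw [← sRefl_sRefl β γ, heq, sRefl_self] at hγ
    exact R.notMem_neg_pos (heq ▸ hsγ) (by simpa using hγ.1)
  · exact R.notMem_neg_pos hβu (heq ▸ hγ.2)

lemma len_add_one_le_of_eq_sRefl_mul {u u' : R.Weyl} {β : EV n} (hβ : β ∈ R.pos)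
    (hu' : (u' : EV n ≃ₗᵢ[ℝ] EV n) = sRefl β * (u : EV n ≃ₗᵢ[ℝ] EV n))
    (hβu' : R.ap u'⁻¹ β ∈ -R.pos) : R.len u + 1 ≤ R.len u' := by
  have hβu : R.ap u⁻¹ β ∈ R.pos := by
    rw [R.ap_inv_of_eq_sRefl_mul hu', sRefl_self] at hβu'
    simpa [ap] using hβu'
  have hle : R.len u ≤ (R.N u' \ {β}).ncard :=
    Set.ncard_le_ncard_of_injOn (R.foldPos β)
      (fun γ hγ => ⟨foldPos_mem_N hβ hu' hβu hγ, foldPos_ne hβu hγ⟩)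
      ((R.injOn_foldPos β).mono fun _ hγ => hγ.1) (R.N_finite u').sdiff
  calc R.len u + 1 ≤ (R.N u' \ {β}).ncard + 1 := Nat.add_le_add_right hle 1
    _ = R.len u' :=
      Set.ncard_sdiff_singleton_add_one (show β ∈ R.N u' from ⟨hβ, hβu'⟩) (R.N_finite u')

lemma len_add_one_le_of_edge {h : Set (EV n)} (hh : h ⊆ R.pos) {u u' : R.Weyl}
    (e : R.Edge h u u') : R.len u + 1 ≤ R.len u' := by
  obtain ⟨β, hβ, hu', hβh⟩ := e
  exact len_add_one_le_of_eq_sRefl_mul hβ hu' (Set.neg_subset_neg.mpr hh hβh)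

lemma len_le_of_flowLe {h : Set (EV n)} (hh : h ⊆ R.pos) {x y : R.Weyl}
    (hxy : R.flowLe h x y) : R.len x ≤ R.len y := by
  induction hxy with
  | refl => rfl
  | tail _ e ih => exact ih.trans (Nat.le_of_succ_le (len_add_one_le_of_edge hh e))

lemma edge_of_flowLe_of_len_eq_add_one {h : Set (EV n)} (hh : h ⊆ R.pos) {w v : R.Weyl}
    (hwv : R.flowLe h w v) (hlen : R.len v = R.len w + 1) : R.Edge h w v := by
  rcases hwv.cases_tail with rfl | ⟨c, hwc, e⟩
  · omega
  rcases hwc.cases_tail with rfl | ⟨d, hwd, e'⟩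
  · exact e
  have := len_le_of_flowLe hh hwd
  have := len_add_one_le_of_edge hh e
  have := len_add_one_le_of_edge hh e'
  omega

end BasedRootSystem

open BasedRootSystem in
/-- If `P` is a flow-up class at `w` and `v = s_α w` is a cover of `w` whose
edge `w → v` is deleted in `Γ_𝔥` (i.e. `v⁻¹α ∉ -𝔥`), then `P(v) = 0`. -/
theorem flowup_deleted_edge_zero {n : ℕ} (R : BasedRootSystem n)
    (h : Set (EV n)) (hh : R.IsHess h) (w v : R.Weyl)
    (P : R.Weyl → MvPolynomial (Fin n) ℝ) (hP : R.IsFlowUp h w P)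
    (α : EV n) (hα : α ∈ R.pos)
    (hv : (v : EV n ≃ₗᵢ[ℝ] EV n) = sRefl α * (w : EV n ≃ₗᵢ[ℝ] EV n))
    (hlen : R.len v = R.len w + 1) (hdel : R.ap v⁻¹ α ∉ -h) :
    P v = 0 := by
  by_contra hPv
  obtain ⟨β, hβ, hvβ, hβh⟩ := edge_of_flowLe_of_len_eq_add_one hh.1 (hP.2.2.2 v hPv) hlen
  obtain rfl : β = α := R.eq_of_sRefl_eq hβ hα (mul_right_cancel (hvβ.symm.trans hv))
  exact hdel hβh
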